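/- Let (𝔥₀, Γ₀) and (𝔥₁, Γ₁) be complex Hilbert spaces with anti-unitary involutions, P_k basis projections with Fock representations π_k on Fock spaces F_k and even-oddness implementers Z_k (k = 0,1). On F₀ ⊗ F₁ define π(a(f₀ ⊕ f₁)) := π₀(a(f₀)) ⊗ 1 + Z₀ ⊗ π₁(a(f₁)). Then π is the Fock representation of CAR(𝔥₀ ⊕ 𝔥₁, Γ₀ ⊕ Γ₁) with respect to the basis projection P₀ ⊕ P₁, with vacuum Ω₀ ⊗ Ω₁, and the even-oddness automorphism of CAR(𝔥₀ ⊕ 𝔥₁, Γ₀ ⊕ Γ₁) is implemented by Z₀ ⊗ Z₁. -/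
import Mathlib


open scoped ComplexInnerProductSpace

/-- Proposition 2.4 (`Tensor`): given Fock representations `π_k` of `CAR(𝔥_k, Γ_k)` w.r.t.
basis projections `P_k` on Fock spaces `F_k` with vacua `Ω_k` and even-oddness implementers
`Z_k` (k = 0,1), the map `π(a(f₀ ⊕ f₁)) := π₀(a(f₀)) ⊗ 1 + Z₀ ⊗ π₁(a(f₁))` on `F₀ ⊗ F₁`
is the Fock representation of `CAR(𝔥₀ ⊕ 𝔥₁, Γ₀ ⊕ Γ₁)` w.r.t. `P₀ ⊕ P₁` with vacuum
`Ω₀ ⊗ Ω₁`, and the even-oddness automorphism is implemented by `Z₀ ⊗ Z₁`. -/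
theorem fock_rep_of_direct_sum_on_tensor_product
    {E₀ : Type*} [NormedAddCommGroup E₀] [InnerProductSpace ℂ E₀] [CompleteSpace E₀]
    {E₁ : Type*} [NormedAddCommGroup E₁] [InnerProductSpace ℂ E₁] [CompleteSpace E₁]
    {F₀ : Type*} [NormedAddCommGroup F₀] [InnerProductSpace ℂ F₀] [CompleteSpace F₀]
    {F₁ : Type*} [NormedAddCommGroup F₁] [InnerProductSpace ℂ F₁] [CompleteSpace F₁]
    {F : Type*} [NormedAddCommGroup F] [InnerProductSpace ℂ F] [CompleteSpace F]
    (Γ₀ : E₀ → E₀) (Γ₁ : E₁ → E₁)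
    (hΓ₀_add : ∀ x y, Γ₀ (x + y) = Γ₀ x + Γ₀ y)
    (hΓ₀_smul : ∀ (c : ℂ) (x : E₀), Γ₀ (c • x) = (starRingEnd ℂ) c • Γ₀ x)
    (hΓ₀_inner : ∀ f h : E₀, ⟪Γ₀ f, Γ₀ h⟫ = ⟪h, f⟫)
    (hΓ₀_inv : ∀ x, Γ₀ (Γ₀ x) = x)
    (hΓ₁_add : ∀ x y, Γ₁ (x + y) = Γ₁ x + Γ₁ y)
    (hΓ₁_smul : ∀ (c : ℂ) (x : E₁), Γ₁ (c • x) = (starRingEnd ℂ) c • Γ₁ x)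
    (hΓ₁_inner : ∀ f h : E₁, ⟪Γ₁ f, Γ₁ h⟫ = ⟪h, f⟫)
    (hΓ₁_inv : ∀ x, Γ₁ (Γ₁ x) = x)
    (P₀ : E₀ →L[ℂ] E₀) (hP₀_proj : P₀ ∘L P₀ = P₀) (hP₀_sa : IsSelfAdjoint P₀)
    (hP₀_basis : ∀ x, P₀ x + Γ₀ (P₀ (Γ₀ x)) = x)
    (P₁ : E₁ →L[ℂ] E₁) (hP₁_proj : P₁ ∘L P₁ = P₁) (hP₁_sa : IsSelfAdjoint P₁)
    (hP₁_basis : ∀ x, P₁ x + Γ₁ (P₁ (Γ₁ x)) = x)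
    -- the Fock representation `a₀` of `CAR(𝔥₀, Γ₀)` on `F₀` with vacuum `Ω₀`
    (a₀ : E₀ → (F₀ →L[ℂ] F₀)) (Ω₀ : F₀) (hΩ₀ : ‖Ω₀‖ = 1)
    (ha₀_add : ∀ f g, a₀ (f + g) = a₀ f + a₀ g)
    (ha₀_smul : ∀ (c : ℂ) (f : E₀), a₀ (c • f) = (starRingEnd ℂ) c • a₀ f)
    (ha₀_star : ∀ f, ContinuousLinearMap.adjoint (a₀ f) = a₀ (Γ₀ f))
    (hCAR₀ : ∀ f h : E₀, a₀ f ∘L ContinuousLinearMap.adjoint (a₀ h)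
      + ContinuousLinearMap.adjoint (a₀ h) ∘L a₀ f = (⟪f, h⟫ : ℂ) • (1 : F₀ →L[ℂ] F₀))
    (hvac₀ : ∀ f : E₀, P₀ f = f → a₀ f Ω₀ = 0)
    (hcyc₀ : ∀ K : Submodule ℂ F₀, IsClosed (K : Set F₀) → Ω₀ ∈ K →
      (∀ f : E₀, ∀ x ∈ K, a₀ f x ∈ K) → K = ⊤)
    -- the Fock representation `a₁` of `CAR(𝔥₁, Γ₁)` on `F₁` with vacuum `Ω₁`
    (a₁ : E₁ → (F₁ →L[ℂ] F₁)) (Ω₁ : F₁) (hΩ₁ : ‖Ω₁‖ = 1)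
    (ha₁_add : ∀ f g, a₁ (f + g) = a₁ f + a₁ g)
    (ha₁_smul : ∀ (c : ℂ) (f : E₁), a₁ (c • f) = (starRingEnd ℂ) c • a₁ f)
    (ha₁_star : ∀ f, ContinuousLinearMap.adjoint (a₁ f) = a₁ (Γ₁ f))
    (hCAR₁ : ∀ f h : E₁, a₁ f ∘L ContinuousLinearMap.adjoint (a₁ h)
      + ContinuousLinearMap.adjoint (a₁ h) ∘L a₁ f = (⟪f, h⟫ : ℂ) • (1 : F₁ →L[ℂ] F₁))
    (hvac₁ : ∀ f : E₁, P₁ f = f → a₁ f Ω₁ = 0)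
    (hcyc₁ : ∀ K : Submodule ℂ F₁, IsClosed (K : Set F₁) → Ω₁ ∈ K →
      (∀ f : E₁, ∀ x ∈ K, a₁ f x ∈ K) → K = ⊤)
    -- the even-oddness implementers `Z₀`, `Z₁`
    (Z₀ : F₀ →L[ℂ] F₀) (hZ₀_sa : IsSelfAdjoint Z₀) (hZ₀_invol : Z₀ ∘L Z₀ = 1)
    (hZ₀_vac : Z₀ Ω₀ = Ω₀) (hZ₀_impl : ∀ f : E₀, Z₀ ∘L a₀ f ∘L Z₀ = -(a₀ f))
    (Z₁ : F₁ →L[ℂ] F₁) (hZ₁_sa : IsSelfAdjoint Z₁) (hZ₁_invol : Z₁ ∘L Z₁ = 1)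
    (hZ₁_vac : Z₁ Ω₁ = Ω₁) (hZ₁_impl : ∀ f : E₁, Z₁ ∘L a₁ f ∘L Z₁ = -(a₁ f))
    -- the Hilbert tensor product `F = F₀ ⊗ F₁`
    (tmul : F₀ → F₁ → F)
    (htmul_addl : ∀ x x' y, tmul (x + x') y = tmul x y + tmul x' y)
    (htmul_addr : ∀ x y y', tmul x (y + y') = tmul x y + tmul x y')
    (htmul_smull : ∀ (c : ℂ) x y, tmul (c • x) y = c • tmul x y)
    (htmul_smulr : ∀ (c : ℂ) x y, tmul x (c • y) = c • tmul x y)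
    (htmul_inner : ∀ x x' y y', ⟪tmul x y, tmul x' y'⟫ = ⟪x, x'⟫ * ⟪y, y'⟫)
    (htmul_dense : Dense (Submodule.span ℂ {v : F | ∃ x y, v = tmul x y} : Set F))
    -- tensor product of operators
    (otimes : (F₀ →L[ℂ] F₀) → (F₁ →L[ℂ] F₁) → (F →L[ℂ] F))
    (hotimes : ∀ A B x y, otimes A B (tmul x y) = tmul (A x) (B y)) :
    -- `π(a(f₀ ⊕ f₁)) = a₀(f₀) ⊗ 1 + Z₀ ⊗ a₁(f₁)` is the Fock representation of
    -- `CAR(𝔥₀ ⊕ 𝔥₁, Γ₀ ⊕ Γ₁)` w.r.t. `P₀ ⊕ P₁`, with vacuum `Ω₀ ⊗ Ω₁`: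
    (∀ f g : E₀ × E₁,
      (otimes (a₀ (f.1 + g.1)) 1 + otimes Z₀ (a₁ (f.2 + g.2)))
        = (otimes (a₀ f.1) 1 + otimes Z₀ (a₁ f.2))
          + (otimes (a₀ g.1) 1 + otimes Z₀ (a₁ g.2))) ∧
    (∀ (c : ℂ) (f : E₀ × E₁),
      (otimes (a₀ (c • f.1)) 1 + otimes Z₀ (a₁ (c • f.2)))
        = (starRingEnd ℂ) c • (otimes (a₀ f.1) 1 + otimes Z₀ (a₁ f.2))) ∧
    (∀ f : E₀ × E₁,
      ContinuousLinearMap.adjoint (otimes (a₀ f.1) 1 + otimes Z₀ (a₁ f.2))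
        = otimes (a₀ (Γ₀ f.1)) 1 + otimes Z₀ (a₁ (Γ₁ f.2))) ∧
    (∀ f g : E₀ × E₁,
      (otimes (a₀ f.1) 1 + otimes Z₀ (a₁ f.2)) ∘L
          ContinuousLinearMap.adjoint (otimes (a₀ g.1) 1 + otimes Z₀ (a₁ g.2))
        + ContinuousLinearMap.adjoint (otimes (a₀ g.1) 1 + otimes Z₀ (a₁ g.2)) ∘L
          (otimes (a₀ f.1) 1 + otimes Z₀ (a₁ f.2))
        = ((⟪f.1, g.1⟫ : ℂ) + (⟪f.2, g.2⟫ : ℂ)) • (1 : F →L[ℂ] F)) ∧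
    (∀ f : E₀ × E₁, P₀ f.1 = f.1 → P₁ f.2 = f.2 →
      (otimes (a₀ f.1) 1 + otimes Z₀ (a₁ f.2)) (tmul Ω₀ Ω₁) = 0) ∧
    (∀ K : Submodule ℂ F, IsClosed (K : Set F) → tmul Ω₀ Ω₁ ∈ K →
      (∀ f : E₀ × E₁, ∀ x ∈ K, (otimes (a₀ f.1) 1 + otimes Z₀ (a₁ f.2)) x ∈ K) → K = ⊤) ∧
    -- the even-oddness automorphism is implemented by `Z₀ ⊗ Z₁`:
    (∀ f : E₀ × E₁,
      otimes Z₀ Z₁ ∘L (otimes (a₀ f.1) 1 + otimes Z₀ (a₁ f.2)) ∘L otimes Z₀ Z₁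
        = -(otimes (a₀ f.1) 1 + otimes Z₀ (a₁ f.2))) := by
  classical
  -- pointwise consequences of the hypotheses
  have hZ₀x : ∀ x, Z₀ (Z₀ x) = x := fun x => by
    have h := congrArg (fun T : F₀ →L[ℂ] F₀ => T x) hZ₀_invol
    simpa using h
  have hZ₁x : ∀ y, Z₁ (Z₁ y) = y := fun y => by
    have h := congrArg (fun T : F₁ →L[ℂ] F₁ => T y) hZ₁_invol
    simpa using h
  have hac₀ : ∀ f x, Z₀ (a₀ f (Z₀ x)) = -(a₀ f x) := fun f x => by
    have h := congrArg (fun T : F₀ →L[ℂ] F₀ => T x) (hZ₀_impl f)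
    simpa using h
  have hac₁ : ∀ f y, Z₁ (a₁ f (Z₁ y)) = -(a₁ f y) := fun f y => by
    have h := congrArg (fun T : F₁ →L[ℂ] F₁ => T y) (hZ₁_impl f)
    simpa using h
  have hanti₀ : ∀ f x, Z₀ (a₀ f x) = -(a₀ f (Z₀ x)) := fun f x => by
    have h := hac₀ f (Z₀ x); rwa [hZ₀x] at h
  have hcar₀p : ∀ f h x, a₀ f (a₀ (Γ₀ h) x) + a₀ (Γ₀ h) (a₀ f x) = (⟪f, h⟫ : ℂ) • x := by
    intro f h x
    have h' := hCAR₀ f h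
    rw [ha₀_star] at h'
    have h2 := congrArg (fun T : F₀ →L[ℂ] F₀ => T x) h'
    simpa using h2
  have hcar₁p : ∀ f h y, a₁ f (a₁ (Γ₁ h) y) + a₁ (Γ₁ h) (a₁ f y) = (⟪f, h⟫ : ℂ) • y := by
    intro f h y
    have h' := hCAR₁ f h
    rw [ha₁_star] at h'
    have h2 := congrArg (fun T : F₁ →L[ℂ] F₁ => T y) h'
    simpa using h2
  have ha₀0 : a₀ 0 = 0 := by
    have h := ha₀_smul 0 0; simpa using h
  have ha₁0 : a₁ 0 = 0 := by
    have h := ha₁_smul 0 0; simpa using h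
  have htmul_zl : ∀ y, tmul 0 y = 0 := fun y => by
    have h := htmul_smull 0 0 y; simpa using h
  have htmul_zr : ∀ x, tmul x 0 = 0 := fun x => by
    have h := htmul_smulr 0 x 0; simpa using h
  have htmul_negl : ∀ x y, tmul (-x) y = -tmul x y := fun x y => by
    have h := htmul_smull (-1) x y; simpa using h
  have htmul_negr : ∀ x y, tmul x (-y) = -tmul x y := fun x y => by
    have h := htmul_smulr (-1) x y; simpa using h
  -- extensionality from inner products against simple tensors
  have inner_ext : ∀ T S : F →L[ℂ] F,
      (∀ x y x' y', (⟪T (tmul x y), tmul x' y'⟫ : ℂ) = ⟪S (tmul x y), tmul x' y'⟫) → T = S := by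
    intro T S h
    have hA : ∀ x' y' (u : F), (⟪T u, tmul x' y'⟫ : ℂ) = ⟪S u, tmul x' y'⟫ := by
      intro x' y'
      have hc1 : Continuous fun u : F => (⟪T u, tmul x' y'⟫ : ℂ) :=
        Continuous.inner T.continuous continuous_const
      have hc2 : Continuous fun u : F => (⟪S u, tmul x' y'⟫ : ℂ) :=
        Continuous.inner S.continuous continuous_const
      have heq : Set.EqOn (fun u : F => (⟪T u, tmul x' y'⟫ : ℂ))
          (fun u : F => (⟪S u, tmul x' y'⟫ : ℂ))
          (Submodule.span ℂ {v : F | ∃ x y, v = tmul x y} : Set F) := by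
        intro u hu
        induction hu using Submodule.span_induction with
        | mem v hv => obtain ⟨x, y, rfl⟩ := hv; simpa using h x y x' y'
        | zero => simp
        | add v w _ _ hv hw =>
          beta_reduce at hv hw ⊢
          simp only [map_add, inner_add_left, hv, hw]
        | smul c v _ hv =>
          beta_reduce at hv ⊢
          simp only [map_smul, inner_smul_left, hv]
      exact fun u => congrFun (Continuous.ext_on htmul_dense hc1 hc2 heq) u
    have hB : ∀ u v : F, (⟪T u, v⟫ : ℂ) = ⟪S u, v⟫ := by
      intro u
      have hc1 : Continuous fun v : F => (⟪T u, v⟫ : ℂ) :=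
        Continuous.inner continuous_const continuous_id
      have hc2 : Continuous fun v : F => (⟪S u, v⟫ : ℂ) :=
        Continuous.inner continuous_const continuous_id
      have heq : Set.EqOn (fun v : F => (⟪T u, v⟫ : ℂ)) (fun v : F => (⟪S u, v⟫ : ℂ))
          (Submodule.span ℂ {v : F | ∃ x y, v = tmul x y} : Set F) := by
        intro v hv
        induction hv using Submodule.span_induction with
        | mem w hw => obtain ⟨x', y', rfl⟩ := hw; simpa using hA x' y' u
        | zero => simp
        | add v w _ _ hv hw =>
          beta_reduce at hv hw ⊢
          simp only [inner_add_right, hv, hw]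
        | smul c v _ hv =>
          beta_reduce at hv ⊢
          simp only [inner_smul_right, hv]
      exact fun v => congrFun (Continuous.ext_on htmul_dense hc1 hc2 heq) v
    ext u
    exact ext_inner_right ℂ (hB u)
  have ext_tmul : ∀ T S : F →L[ℂ] F, (∀ x y, T (tmul x y) = S (tmul x y)) → T = S := by
    intro T S h
    exact inner_ext T S fun x y x' y' => by rw [h]
  -- adjoint of an elementary tensor of operators
  have adj_otimes : ∀ (A : F₀ →L[ℂ] F₀) (B : F₁ →L[ℂ] F₁),
      ContinuousLinearMap.adjoint (otimes A B)
        = otimes (ContinuousLinearMap.adjoint A) (ContinuousLinearMap.adjoint B) := by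
    intro A B
    refine inner_ext _ _ fun x y x' y' => ?_
    simp [ContinuousLinearMap.adjoint_inner_left, hotimes, htmul_inner]
  -- norm of a simple tensor
  have norm_tmul : ∀ (x : F₀) (y : F₁), ‖tmul x y‖ = ‖x‖ * ‖y‖ := by
    intro x y
    have h := htmul_inner x x y y
    rw [inner_self_eq_norm_sq_to_K, inner_self_eq_norm_sq_to_K, inner_self_eq_norm_sq_to_K] at h
    have h3 : ‖tmul x y‖ ^ 2 = (‖x‖ * ‖y‖) ^ 2 := by rw [mul_pow]; exact_mod_cast h
    calc ‖tmul x y‖ = Real.sqrt (‖tmul x y‖ ^ 2) := (Real.sqrt_sq (norm_nonneg _)).symm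
      _ = Real.sqrt ((‖x‖ * ‖y‖) ^ 2) := by rw [h3]
      _ = ‖x‖ * ‖y‖ := Real.sqrt_sq (by positivity)
  -- additivity
  have hadd : ∀ f g : E₀ × E₁,
      (otimes (a₀ (f.1 + g.1)) 1 + otimes Z₀ (a₁ (f.2 + g.2)))
        = (otimes (a₀ f.1) 1 + otimes Z₀ (a₁ f.2))
          + (otimes (a₀ g.1) 1 + otimes Z₀ (a₁ g.2)) := by
    intro f g
    refine ext_tmul _ _ fun x y => ?_
    simp only [ContinuousLinearMap.add_apply, hotimes, ha₀_add f.1 g.1, ha₁_add f.2 g.2,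
      ContinuousLinearMap.one_apply, htmul_addl, htmul_addr]
    abel
  -- antilinearity
  have hsmul : ∀ (c : ℂ) (f : E₀ × E₁),
      (otimes (a₀ (c • f.1)) 1 + otimes Z₀ (a₁ (c • f.2)))
        = (starRingEnd ℂ) c • (otimes (a₀ f.1) 1 + otimes Z₀ (a₁ f.2)) := by
    intro c f
    refine ext_tmul _ _ fun x y => ?_
    simp only [ContinuousLinearMap.add_apply, ContinuousLinearMap.smul_apply, hotimes,
      ha₀_smul c f.1, ha₁_smul c f.2, ContinuousLinearMap.one_apply,
      htmul_smull, htmul_smulr, smul_add]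
  -- the adjoint relation
  have hadj : ∀ f : E₀ × E₁,
      ContinuousLinearMap.adjoint (otimes (a₀ f.1) 1 + otimes Z₀ (a₁ f.2))
        = otimes (a₀ (Γ₀ f.1)) 1 + otimes Z₀ (a₁ (Γ₁ f.2)) := by
    intro f
    have h1 : ContinuousLinearMap.adjoint (1 : F₁ →L[ℂ] F₁) = 1 := by
      rw [← ContinuousLinearMap.star_eq_adjoint, star_one]
    have hZ : ContinuousLinearMap.adjoint Z₀ = Z₀ := by
      rw [← ContinuousLinearMap.star_eq_adjoint]; exact hZ₀_sa.star_eq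
    rw [map_add, adj_otimes, adj_otimes, ha₀_star, ha₁_star, h1, hZ]
  -- the CAR relation
  have hcar : ∀ f g : E₀ × E₁,
      (otimes (a₀ f.1) 1 + otimes Z₀ (a₁ f.2)) ∘L
          ContinuousLinearMap.adjoint (otimes (a₀ g.1) 1 + otimes Z₀ (a₁ g.2))
        + ContinuousLinearMap.adjoint (otimes (a₀ g.1) 1 + otimes Z₀ (a₁ g.2)) ∘L
          (otimes (a₀ f.1) 1 + otimes Z₀ (a₁ f.2))
        = ((⟪f.1, g.1⟫ : ℂ) + (⟪f.2, g.2⟫ : ℂ)) • (1 : F →L[ℂ] F) := by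
    intro f g
    rw [hadj g]
    refine ext_tmul _ _ fun x y => ?_
    simp only [ContinuousLinearMap.add_apply, ContinuousLinearMap.comp_apply, map_add, hotimes,
      ContinuousLinearMap.one_apply, ContinuousLinearMap.smul_apply, hZ₀x]
    have e1 : tmul (a₀ f.1 (a₀ (Γ₀ g.1) x)) y + tmul (a₀ (Γ₀ g.1) (a₀ f.1 x)) y
        = (⟪f.1, g.1⟫ : ℂ) • tmul x y := by
      rw [← htmul_addl, hcar₀p, htmul_smull]
    have e2 : tmul x (a₁ f.2 (a₁ (Γ₁ g.2) y)) + tmul x (a₁ (Γ₁ g.2) (a₁ f.2 y))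
        = (⟪f.2, g.2⟫ : ℂ) • tmul x y := by
      rw [← htmul_addr, hcar₁p, htmul_smulr]
    have e3 : tmul (Z₀ (a₀ (Γ₀ g.1) x)) (a₁ f.2 y)
        + tmul (a₀ (Γ₀ g.1) (Z₀ x)) (a₁ f.2 y) = 0 := by
      rw [← htmul_addl,
        show Z₀ (a₀ (Γ₀ g.1) x) + a₀ (Γ₀ g.1) (Z₀ x) = 0 from by rw [hanti₀]; abel]
      exact htmul_zl _
    have e4 : tmul (a₀ f.1 (Z₀ x)) (a₁ (Γ₁ g.2) y)
        + tmul (Z₀ (a₀ f.1 x)) (a₁ (Γ₁ g.2) y) = 0 := by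
      rw [← htmul_addl,
        show a₀ f.1 (Z₀ x) + Z₀ (a₀ f.1 x) = 0 from by rw [hanti₀]; abel]
      exact htmul_zl _
    rw [add_smul]
    linear_combination (norm := module) e1 + e2 + e3 + e4
  -- the vacuum is annihilated
  have hvacc : ∀ f : E₀ × E₁, P₀ f.1 = f.1 → P₁ f.2 = f.2 →
      (otimes (a₀ f.1) 1 + otimes Z₀ (a₁ f.2)) (tmul Ω₀ Ω₁) = 0 := by
    intro f h1 h2
    simp only [ContinuousLinearMap.add_apply, hotimes, ContinuousLinearMap.one_apply,
      hvac₀ f.1 h1, hvac₁ f.2 h2, hZ₀_vac, htmul_zl, htmul_zr, add_zero]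
  -- cyclicity of the vacuum
  have hcyc : ∀ K : Submodule ℂ F, IsClosed (K : Set F) → tmul Ω₀ Ω₁ ∈ K →
      (∀ f : E₀ × E₁, ∀ x ∈ K, (otimes (a₀ f.1) 1 + otimes Z₀ (a₁ f.2)) x ∈ K) → K = ⊤ := by
    intro K hKcl hKΩ hKinv
    have happ : ∀ (f₀ : E₀) (f₁ : E₁) (x : F₀) (y : F₁), tmul x y ∈ K →
        tmul (a₀ f₀ x) y + tmul (Z₀ x) (a₁ f₁ y) ∈ K := by
      intro f₀ f₁ x y hxy
      have h := hKinv (f₀, f₁) (tmul x y) hxy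
      simpa [ContinuousLinearMap.add_apply, hotimes, ContinuousLinearMap.one_apply] using h
    have step1 : ∀ x : F₀, tmul x Ω₁ ∈ K := by
      let L : F₀ →ₗ[ℂ] F :=
        { toFun := fun x => tmul x Ω₁
          map_add' := fun u v => htmul_addl u v Ω₁
          map_smul' := fun c u => htmul_smull c u Ω₁ }
      let Lc : F₀ →L[ℂ] F := L.mkContinuous ‖Ω₁‖ fun u => by
        rw [show L u = tmul u Ω₁ from rfl, norm_tmul, mul_comm]
      have hcl : IsClosed ((K.comap L : Submodule ℂ F₀) : Set F₀) := by
        have hset : ((K.comap L : Submodule ℂ F₀) : Set F₀) = Lc ⁻¹' (K : Set F) := rfl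
        rw [hset]
        exact hKcl.preimage Lc.continuous
      have htop := hcyc₀ (K.comap L) hcl (Submodule.mem_comap.mpr hKΩ) (by
        intro f x hx
        rw [Submodule.mem_comap] at hx ⊢
        have hx' : tmul x Ω₁ ∈ K := hx
        have h := happ f 0 x Ω₁ hx'
        rw [ha₁0] at h
        simp only [ContinuousLinearMap.zero_apply, htmul_zr, add_zero] at h
        exact h)
      intro x
      have hx : x ∈ K.comap L := by rw [htop]; trivial
      exact Submodule.mem_comap.mp hx
    have step2 : ∀ x : F₀, Z₀ x = x ∨ Z₀ x = -x → ∀ y : F₁, tmul x y ∈ K := by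
      intro x hx
      let L : F₁ →ₗ[ℂ] F :=
        { toFun := fun y => tmul x y
          map_add' := fun u v => htmul_addr x u v
          map_smul' := fun c u => htmul_smulr c x u }
      let Lc : F₁ →L[ℂ] F := L.mkContinuous ‖x‖ fun u => by
        rw [show L u = tmul x u from rfl, norm_tmul]
      have hcl : IsClosed ((K.comap L : Submodule ℂ F₁) : Set F₁) := by
        have hset : ((K.comap L : Submodule ℂ F₁) : Set F₁) = Lc ⁻¹' (K : Set F) := rfl
        rw [hset]
        exact hKcl.preimage Lc.continuous
      have htop := hcyc₁ (K.comap L) hcl (Submodule.mem_comap.mpr (step1 x)) (by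
        intro g y hy
        rw [Submodule.mem_comap] at hy ⊢
        have hy' : tmul x y ∈ K := hy
        have h := happ 0 g x y hy'
        rw [ha₀0] at h
        simp only [ContinuousLinearMap.zero_apply, htmul_zl, zero_add] at h
        show tmul x (a₁ g y) ∈ K
        rcases hx with he | ho
        · rwa [he] at h
        · rw [ho, htmul_negl] at h
          simpa using K.neg_mem h)
      intro y
      have hy : y ∈ K.comap L := by rw [htop]; trivial
      exact Submodule.mem_comap.mp hy
    have hall : ∀ (x : F₀) (y : F₁), tmul x y ∈ K := by
      intro x y
      have he : Z₀ ((2⁻¹ : ℂ) • (x + Z₀ x)) = (2⁻¹ : ℂ) • (x + Z₀ x) := by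
        rw [map_smul, map_add, hZ₀x, add_comm]
      have ho : Z₀ ((2⁻¹ : ℂ) • (x - Z₀ x)) = -((2⁻¹ : ℂ) • (x - Z₀ x)) := by
        rw [map_smul, map_sub, hZ₀x, ← smul_neg, neg_sub]
      have h1 := step2 _ (Or.inl he) y
      have h2 := step2 _ (Or.inr ho) y
      have hx : x = (2⁻¹ : ℂ) • (x + Z₀ x) + (2⁻¹ : ℂ) • (x - Z₀ x) := by module
      rw [hx, htmul_addl]
      exact K.add_mem h1 h2
    have hspan : Submodule.span ℂ {v : F | ∃ x y, v = tmul x y} ≤ K := by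
      rw [Submodule.span_le]
      rintro v ⟨x, y, rfl⟩
      exact hall x y
    have hclosure : (K : Set F) = Set.univ := by
      apply Set.eq_univ_of_univ_subset
      rw [← htmul_dense.closure_eq]
      exact hKcl.closure_subset_iff.mpr fun v hv => hspan hv
    exact Submodule.eq_top_iff'.mpr fun v => by
      have hv : v ∈ (K : Set F) := by rw [hclosure]; trivial
      exact hv
  -- implementation of the even-oddness automorphism
  have himpl : ∀ f : E₀ × E₁,
      otimes Z₀ Z₁ ∘L (otimes (a₀ f.1) 1 + otimes Z₀ (a₁ f.2)) ∘L otimes Z₀ Z₁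
        = -(otimes (a₀ f.1) 1 + otimes Z₀ (a₁ f.2)) := by
    intro f
    refine ext_tmul _ _ fun x y => ?_
    simp only [ContinuousLinearMap.comp_apply, ContinuousLinearMap.add_apply, map_add, hotimes,
      ContinuousLinearMap.one_apply, ContinuousLinearMap.neg_apply, hZ₀x, hZ₁x, hac₀, hac₁,
      htmul_negl, htmul_negr]
    abel
  exact ⟨hadd, hsmul, hadj, hcar, hvacc, hcyc, himpl⟩
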